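/- For any w \in Sym_n, the number of w-fixed cosets in (\mathbb{Z}/2\mathbb{Z})^n / \langle(1,...,1)\rangle under the coordinate-permutation action equals the number of w-stable subsets of \{1,...,n\} of even cardinality. -/

import Mathlib

open scoped Classical

/-- The diagonal subgroup of `(ℤ/2ℤ)^n` generated by `(1,1,…,1)`. -/
def diagSubgroup (n : ℕ) : AddSubgroup (Fin n → ZMod 2) :=
  AddSubgroup.closure {fun _ => 1}

/-- The coordinate-permutation action of `w ∈ Sym_n` on `(ℤ/2ℤ)^n`. -/
def permCoordHom {n : ℕ} (w : Equiv.Perm (Fin n)) :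
    (Fin n → ZMod 2) →+ (Fin n → ZMod 2) :=
  AddMonoidHom.mk' (fun a => a ∘ ⇑w⁻¹) (fun _ _ => rfl)

/-- The induced action of `w` on the quotient `(ℤ/2ℤ)^n / ⟨(1,…,1)⟩`. -/
def permQuotHom {n : ℕ} (w : Equiv.Perm (Fin n)) :
    (Fin n → ZMod 2) ⧸ diagSubgroup n →+ (Fin n → ZMod 2) ⧸ diagSubgroup n :=
  QuotientAddGroup.map _ _ (permCoordHom w) (by
    rw [diagSubgroup, AddSubgroup.closure_le]
    rintro x rfl
    exact AddSubgroup.subset_closure rfl)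

/-!
Write `V = (ZMod 2)^n`, `D = ⟨(1,…,1)⟩`, `φ a = w • a - a` and `K = ker φ`, the `w`-invariant
vectors, i.e. the indicators of `w`-stable sets. A coset `a + D` is fixed iff `φ a ∈ D`, so
`|Fix| · |D| = |φ⁻¹ D| = |K| · |D ∩ range φ|`. The even stable sets are the kernel of the
coordinate sum `Σ` on `K`, so `|K| = |K ∩ ker Σ| · |Σ K|`. It remains that
`|D ∩ range φ| · |Σ K| = |D|`: the transpose of `φ` is `k ↦ k ∘ w - k`, whose kernel is again `K`,
so `(1,…,1) ∈ range φ` iff `Σ` vanishes on `K`.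
-/

theorem AddSubgroup.card_eq_card_inf_ker_mul_card_map {G H : Type*} [AddGroup G] [AddGroup H]
    (F : AddSubgroup G) (f : G →+ H) :
    Nat.card F = Nat.card (F ⊓ f.ker : AddSubgroup G) * Nat.card (F.map f) := by
  rw [← (f.domRestrict F).ker.card_mul_index, AddSubgroup.index_ker,
    AddMonoidHom.domRestrict_range, AddMonoidHom.ker_domRestrict,
    ← AddSubgroup.inf_addSubgroupOf_left,
    Nat.card_congr (AddSubgroup.addSubgroupOfEquivOfLe inf_le_left).toEquiv]

theorem LinearMap.mem_range_iff_forall_dotProduct {K ι ι' : Type*} [Field K] [Fintype ι']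
    [DecidableEq ι'] (f : (ι → K) →ₗ[K] (ι' → K)) (v : ι' → K) :
    v ∈ LinearMap.range f ↔ ∀ k, (∀ b, f b ⬝ᵥ k = 0) → v ⬝ᵥ k = 0 := by
  rw [← Subspace.forall_mem_dualAnnihilator_apply_eq_zero_iff,
    ← (dotProductEquiv K ι').toEquiv.forall_congr_right]
  simp [Submodule.mem_dualAnnihilator, dotProduct_comm]

theorem ZMod.eq_zero_or_eq_one_of_two (z : ZMod 2) : z = 0 ∨ z = 1 := by
  fin_cases z
  exacts [.inl rfl, .inr rfl]

theorem Finset.forall_mem_perm_mem_iff {α : Type*} {w : Equiv.Perm α} {A : Finset α} :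
    (∀ i ∈ A, w i ∈ A) ↔ ∀ i, w i ∈ A ↔ i ∈ A := by
  refine ⟨fun h i => ?_, fun h i hi => (h i).2 hi⟩
  have hmap : A.map w.toEmbedding = A := Finset.map_eq_of_subset fun _ hx => by
    obtain ⟨j, hj, rfl⟩ := Finset.mem_map.1 hx
    exact h j hj
  conv_lhs => rw [← hmap]
  exact Finset.mem_map' _

section

variable {α : Type*} [Fintype α] [DecidableEq α]

variable (α) in
def finsetEquivZModTwo : Finset α ≃ (α → ZMod 2) where
  toFun A i := if i ∈ A then 1 else 0
  invFun a := {i | a i = 1}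
  left_inv A := by ext; simp
  right_inv a := by
    funext i
    rcases (a i).eq_zero_or_eq_one_of_two with h | h <;> simp [h]

theorem finsetEquivZModTwo_apply (A : Finset α) (i : α) :
    finsetEquivZModTwo α A i = if i ∈ A then 1 else 0 := rfl

theorem finsetEquivZModTwo_apply_eq_iff (A : Finset α) (i j : α) :
    finsetEquivZModTwo α A i = finsetEquivZModTwo α A j ↔ (i ∈ A ↔ j ∈ A) := by
  by_cases i ∈ A <;> by_cases j ∈ A <;> simp [finsetEquivZModTwo_apply, *]

theorem sum_finsetEquivZModTwo (A : Finset α) : ∑ i, finsetEquivZModTwo α A i = A.card := by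
  simp [finsetEquivZModTwo_apply]

end

section

variable {n : ℕ}

def permCoordDiff (w : Equiv.Perm (Fin n)) : (Fin n → ZMod 2) →+ (Fin n → ZMod 2) :=
  permCoordHom w - AddMonoidHom.id _

def coordSum (n : ℕ) : (Fin n → ZMod 2) →+ ZMod 2 :=
  AddMonoidHom.mk' (fun a => ∑ i, a i) fun _ _ => Finset.sum_add_distrib

theorem permCoordDiff_apply (w : Equiv.Perm (Fin n)) (a : Fin n → ZMod 2) (i : Fin n) :
    permCoordDiff w a i = a (w⁻¹ i) - a i := rfl

theorem coordSum_apply (a : Fin n → ZMod 2) : coordSum n a = ∑ i, a i := rfl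

theorem mem_ker_permCoordDiff_iff {w : Equiv.Perm (Fin n)} {a : Fin n → ZMod 2} :
    a ∈ (permCoordDiff w).ker ↔ ∀ i, a (w i) = a i := by
  rw [AddMonoidHom.mem_ker, funext_iff, ← w.forall_congr_right]
  simp only [permCoordDiff_apply, Equiv.Perm.inv_def, Equiv.symm_apply_apply, Pi.zero_apply,
    sub_eq_zero]
  exact forall_congr' fun _ => eq_comm

theorem permCoordDiff_dotProduct (w : Equiv.Perm (Fin n)) (b k : Fin n → ZMod 2) :
    permCoordDiff w b ⬝ᵥ k = (k ∘ w - k) ⬝ᵥ b := by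
  rw [dotProduct_comm (k ∘ w - k)]
  simp only [dotProduct, permCoordDiff_apply, Pi.sub_apply, Function.comp_apply, sub_mul,
    mul_sub, Finset.sum_sub_distrib]
  rw [← Equiv.sum_comp w]
  simp

theorem one_mem_range_permCoordDiff_iff (w : Equiv.Perm (Fin n)) :
    1 ∈ (permCoordDiff w).range ↔ ∀ k ∈ (permCoordDiff w).ker, coordSum n k = 0 := by
  have h := LinearMap.mem_range_iff_forall_dotProduct ((permCoordDiff w).toZModLinearMap 2) 1
  simp only [AddMonoidHom.coe_toZModLinearMap, permCoordDiff_dotProduct, dotProduct_eq_zero_iff,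
    one_dotProduct, sub_eq_zero, funext_iff, Function.comp_apply] at h
  simp only [mem_ker_permCoordDiff_iff, coordSum_apply]
  exact h

theorem mem_diagSubgroup_iff {x : Fin n → ZMod 2} : x ∈ diagSubgroup n ↔ x = 0 ∨ x = 1 := by
  change x ∈ AddSubgroup.closure {1} ↔ _
  rw [← AddSubgroup.zmultiples_eq_closure, AddSubgroup.mem_zmultiples_iff]
  constructor
  · rintro ⟨k, rfl⟩
    rw [← Int.cast_smul_eq_zsmul (ZMod 2)]
    rcases (k : ZMod 2).eq_zero_or_eq_one_of_two with h | h <;> simp [h]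
  · rintro (rfl | rfl)
    exacts [⟨0, zero_zsmul _⟩, ⟨1, one_zsmul _⟩]

theorem permQuotHom_mk_eq_iff (w : Equiv.Perm (Fin n)) (a : Fin n → ZMod 2) :
    permQuotHom w a = a ↔ permCoordDiff w a ∈ diagSubgroup n := by
  rw [permQuotHom, QuotientAddGroup.map_mk, QuotientAddGroup.eq_iff_sub_mem]
  rfl

theorem diagSubgroup_le_comap_permCoordDiff (w : Equiv.Perm (Fin n)) :
    diagSubgroup n ≤ (diagSubgroup n).comap (permCoordDiff w) := by
  rw [diagSubgroup, AddSubgroup.closure_le, Set.singleton_subset_iff, SetLike.mem_coe,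
    AddSubgroup.mem_comap]
  convert AddSubgroup.zero_mem _
  funext i
  simp [permCoordDiff_apply]

theorem card_diagSubgroup (hn : n ≠ 0) : Nat.card (diagSubgroup n) = 2 := by
  have : NeZero n := ⟨hn⟩
  change Nat.card (AddSubgroup.closure {(1 : Fin n → ZMod 2)}) = 2
  rw [← AddSubgroup.zmultiples_eq_closure, Nat.card_zmultiples]
  exact addOrderOf_eq_prime (by funext; rfl) one_ne_zero

theorem card_fixed_mul_card_diagSubgroup (w : Equiv.Perm (Fin n)) :
    Nat.card {q // permQuotHom w q = q} * Nat.card (diagSubgroup n) =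
      Nat.card ((diagSubgroup n).comap (permCoordDiff w)) := by
  set F := (diagSubgroup n).comap (permCoordDiff w)
  have hDF := diagSubgroup_le_comap_permCoordDiff w
  have hfix (q) : q ∈ F.map (QuotientAddGroup.mk' (diagSubgroup n)) ↔ permQuotHom w q = q := by
    induction q using QuotientAddGroup.induction_on with | H a => ?_
    rw [← QuotientAddGroup.mk'_apply, ← AddSubgroup.mem_comap, AddSubgroup.comap_map_eq,
      QuotientAddGroup.ker_mk', sup_eq_left.mpr hDF, QuotientAddGroup.mk'_apply,
      permQuotHom_mk_eq_iff, AddSubgroup.mem_comap]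
  rw [F.card_eq_card_inf_ker_mul_card_map (QuotientAddGroup.mk' (diagSubgroup n)),
    QuotientAddGroup.ker_mk', inf_eq_right.mpr hDF, mul_comm,
    Nat.card_congr (Equiv.subtypeEquivRight hfix)]

theorem card_diagSubgroup_inf_range_mul_card_map_ker (w : Equiv.Perm (Fin n)) :
    Nat.card (diagSubgroup n ⊓ (permCoordDiff w).range : AddSubgroup _) *
      Nat.card ((permCoordDiff w).ker.map (coordSum n)) = Nat.card (diagSubgroup n) := by
  by_cases h : (1 : Fin n → ZMod 2) ∈ (permCoordDiff w).range
  · have hD : diagSubgroup n ≤ (permCoordDiff w).range := by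
      rw [diagSubgroup, AddSubgroup.closure_le, Set.singleton_subset_iff]
      exact h
    have hS : (permCoordDiff w).ker.map (coordSum n) = ⊥ := by
      rw [eq_bot_iff]
      rintro _ ⟨k, hk, rfl⟩
      exact (one_mem_range_permCoordDiff_iff w).1 h k hk
    rw [inf_eq_left.mpr hD, hS, AddSubgroup.card_bot, mul_one]
  · have hD : diagSubgroup n ⊓ (permCoordDiff w).range = ⊥ := by
      rw [eq_bot_iff]
      rintro x ⟨hxD, hxR⟩
      rcases mem_diagSubgroup_iff.1 hxD with rfl | rfl
      exacts [zero_mem _, absurd hxR h]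
    have hS : (permCoordDiff w).ker.map (coordSum n) = ⊤ := by
      obtain ⟨k, hk, hsum⟩ : ∃ k ∈ (permCoordDiff w).ker, coordSum n k ≠ 0 := by
        simpa using (one_mem_range_permCoordDiff_iff w).not.1 h
      rw [AddSubgroup.eq_top_iff']
      intro z
      rcases z.eq_zero_or_eq_one_of_two with rfl | rfl
      exacts [zero_mem _, ⟨k, hk, (coordSum n k).eq_zero_or_eq_one_of_two.resolve_left hsum⟩]
    have hn : n ≠ 0 := by
      rintro rfl
      exact h ⟨0, Subsingleton.elim _ _⟩
    rw [hD, hS, AddSubgroup.card_bot, AddSubgroup.card_top, one_mul, Nat.card_zmod,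
      card_diagSubgroup hn]

theorem card_ker_inf_ker_coordSum (w : Equiv.Perm (Fin n)) :
    Nat.card ((permCoordDiff w).ker ⊓ (coordSum n).ker : AddSubgroup _) =
      (Finset.univ.powerset.filter fun A : Finset (Fin n) =>
        (∀ i ∈ A, w i ∈ A) ∧ Even A.card).card := by
  rw [Finset.powerset_univ, ← Fintype.card_subtype, ← Nat.card_eq_fintype_card]
  refine Nat.card_congr ((finsetEquivZModTwo (Fin n)).subtypeEquiv fun A => ?_).symm
  rw [AddSubgroup.mem_inf, mem_ker_permCoordDiff_iff, AddMonoidHom.mem_ker, coordSum_apply,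
    sum_finsetEquivZModTwo, ZMod.natCast_eq_zero_iff_even, Finset.forall_mem_perm_mem_iff]
  simp only [finsetEquivZModTwo_apply_eq_iff]

end

/-- For any `w ∈ Sym_n`, the number of `w`-fixed cosets in
`(ℤ/2ℤ)^n / ⟨(1,…,1)⟩` under the coordinate-permutation action equals the number of
`w`-stable subsets of `{1,…,n}` of even cardinality. -/
theorem card_fixed_cosets_eq_card_even_stable_subsets {n : ℕ} (w : Equiv.Perm (Fin n)) :
    Nat.card {q : (Fin n → ZMod 2) ⧸ diagSubgroup n // permQuotHom w q = q} =
      (Finset.univ.powerset.filter fun A : Finset (Fin n) =>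
        (∀ i ∈ A, w i ∈ A) ∧ Even A.card).card := by
  set φ := permCoordDiff w
  set D := diagSubgroup n
  have hcount : Nat.card {q // permQuotHom w q = q} * Nat.card D =
      Nat.card (φ.ker ⊓ (coordSum n).ker : AddSubgroup _) * Nat.card D := by
    rw [card_fixed_mul_card_diagSubgroup, (D.comap φ).card_eq_card_inf_ker_mul_card_map φ,
      inf_eq_right.mpr (φ.ker_le_comap D), AddSubgroup.map_comap_eq, inf_comm,
      φ.ker.card_eq_card_inf_ker_mul_card_map (coordSum n),
      ← card_diagSubgroup_inf_range_mul_card_map_ker w]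
    ring
  rw [← card_ker_inf_ker_coordSum]
  exact Nat.eq_of_mul_eq_mul_right Nat.card_pos hcount
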